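/- arXiv:2003.13908 — 4 statements merged into one kernel-verified Lean document; each statement's English description precedes it below -/
import Mathlib

section
/- Let S be a real symmetric positive definite n×n matrix and let ℓ > 0 be a real number. Consider the function f(V) = trace(V S) − ℓ · log det V defined on real symmetric positive definite n×n matrices V. Then f attains its unique global minimum at V* = ℓ S^{-1}; that is, f(V) ≥ f(ℓ S^{-1}) for every symmetric positive definite V, with equality if and only if V = ℓ S^{-1}. -/
/-!
Factor `S = B Bᴴ` and put `A = Bᴴ V B`, which is positive definite. Then
`trace (V S) - ℓ log det V = trace A - ℓ log det A + ℓ log det S`, and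
`trace A - ℓ log det A = ∑ᵢ (μᵢ - ℓ log μᵢ)` over the eigenvalues `μᵢ > 0` of `A`.
By `log x ≤ x - 1` each summand is minimised exactly at `μᵢ = ℓ`, i.e. at `A = ℓ • 1`,
which is `V = ℓ • S⁻¹`.
-/

open Matrix

namespace Real

theorem sub_mul_log_lt_sub_mul_log {l t : ℝ} (hl : 0 < l) (ht : 0 < t) (hne : t ≠ l) :
    l - l * log l < t - l * log t := by
  have h := log_lt_sub_one_of_pos (div_pos ht hl) (by rwa [ne_eq, div_eq_one_iff_eq hl.ne'])
  rw [log_div ht.ne' hl.ne', lt_sub_iff_add_lt, lt_div_iff₀ hl] at h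
  linarith

theorem sub_mul_log_le_sub_mul_log {l t : ℝ} (hl : 0 < l) (ht : 0 < t) :
    l - l * log l ≤ t - l * log t := by
  rcases eq_or_ne t l with rfl | hne
  · exact le_rfl
  · exact (sub_mul_log_lt_sub_mul_log hl ht hne).le

end Real

namespace Matrix

variable {ι 𝕜 : Type*} [Fintype ι] [DecidableEq ι] [RCLike 𝕜]

theorem IsHermitian.eq_smul_one_of_eigenvalues_eq {A : Matrix ι ι 𝕜} (hA : A.IsHermitian) {c : ℝ}
    (h : ∀ i, hA.eigenvalues i = c) : A = (c : 𝕜) • 1 := by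
  have hdiag : diagonal (RCLike.ofReal ∘ hA.eigenvalues) = (c : 𝕜) • (1 : Matrix ι ι 𝕜) := by
    rw [smul_one_eq_diagonal]
    exact congrArg diagonal (funext fun i ↦ by simp [h i])
  rw [hA.spectral_theorem, hdiag, map_smul, map_one]

theorem trace_smul_one_sub_mul_log_det (l : ℝ) :
    (l • 1 : Matrix ι ι ℝ).trace - l * Real.log (l • 1 : Matrix ι ι ℝ).det =
      Fintype.card ι * (l - l * Real.log l) := by
  rw [trace_smul, trace_one, det_smul, det_one, mul_one, Real.log_pow, smul_eq_mul]
  ring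

theorem PosDef.trace_sub_mul_log_det_eq_sum {A : Matrix ι ι ℝ} (hA : A.PosDef) (l : ℝ) :
    A.trace - l * Real.log A.det =
      ∑ i, (hA.isHermitian.eigenvalues i - l * Real.log (hA.isHermitian.eigenvalues i)) := by
  simp only [hA.isHermitian.trace_eq_sum_eigenvalues, hA.isHermitian.det_eq_prod_eigenvalues,
    RCLike.ofReal_real_eq_id, id]
  rw [Real.log_prod fun i _ ↦ (hA.eigenvalues_pos i).ne', Finset.sum_sub_distrib, Finset.mul_sum]

theorem PosDef.card_mul_le_trace_sub_mul_log_det {A : Matrix ι ι ℝ} (hA : A.PosDef) {l : ℝ}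
    (hl : 0 < l) : Fintype.card ι * (l - l * Real.log l) ≤ A.trace - l * Real.log A.det := by
  rw [hA.trace_sub_mul_log_det_eq_sum, ← nsmul_eq_mul, ← Finset.card_univ, ← Finset.sum_const]
  exact Finset.sum_le_sum fun i _ ↦ Real.sub_mul_log_le_sub_mul_log hl (hA.eigenvalues_pos i)

theorem PosDef.trace_sub_mul_log_det_eq_iff {A : Matrix ι ι ℝ} (hA : A.PosDef) {l : ℝ}
    (hl : 0 < l) :
    A.trace - l * Real.log A.det = Fintype.card ι * (l - l * Real.log l) ↔ A = l • 1 := by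
  refine ⟨fun h ↦ ?_, fun h ↦ h ▸ trace_smul_one_sub_mul_log_det l⟩
  rw [hA.trace_sub_mul_log_det_eq_sum, ← nsmul_eq_mul, ← Finset.card_univ,
    ← Finset.sum_const] at h
  refine hA.isHermitian.eq_smul_one_of_eigenvalues_eq fun i ↦ by_contra fun hne ↦ ?_
  refine (Finset.sum_lt_sum (fun j _ ↦ Real.sub_mul_log_le_sub_mul_log hl (hA.eigenvalues_pos j))
    ⟨i, Finset.mem_univ i, Real.sub_mul_log_lt_sub_mul_log hl (hA.eigenvalues_pos i) hne⟩).ne' h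

theorem trace_mul_mul_conjTranspose_sub_mul_log_det {B V : Matrix ι ι ℝ} (hB : B.det ≠ 0)
    (hV : V.det ≠ 0) (l : ℝ) :
    (V * (B * Bᴴ)).trace - l * Real.log V.det =
      (Bᴴ * V * B).trace - l * Real.log (Bᴴ * V * B).det + l * Real.log (B * Bᴴ).det := by
  have hBH : Bᴴ.det = B.det := by simp
  rw [← mul_assoc, trace_mul_cycle, det_mul, det_mul, det_mul, hBH,
    Real.log_mul (mul_ne_zero hB hV) hB, Real.log_mul hB hV, Real.log_mul hB hB]
  ring

theorem conjTranspose_mul_mul_eq_smul_one_iff {B V : Matrix ι ι 𝕜} (hB : IsUnit B.det)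
    (c : 𝕜) : Bᴴ * V * B = c • 1 ↔ V = c • (B * Bᴴ)⁻¹ := by
  have hBH : IsUnit Bᴴ.det := by rwa [det_conjTranspose, isUnit_star]
  have hinv : Bᴴ * (c • (B * Bᴴ)⁻¹) * B = c • 1 := by
    rw [mul_inv_rev, mul_smul_comm, smul_mul_assoc, ← mul_assoc, mul_nonsing_inv _ hBH,
      one_mul, nonsing_inv_mul _ hB]
  rw [← hinv, ((isUnit_iff_isUnit_det B).2 hB).mul_left_inj,
    ((isUnit_iff_isUnit_det Bᴴ).2 hBH).mul_right_inj]

open scoped ComplexOrder MatrixOrder in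
theorem PosDef.exists_eq_mul_conjTranspose {S : Matrix ι ι 𝕜} (hS : S.PosDef) :
    ∃ B : Matrix ι ι 𝕜, IsUnit B.det ∧ S = B * Bᴴ := by
  obtain ⟨B, rfl⟩ := CStarAlgebra.nonneg_iff_eq_mul_star_self.mp hS.posSemidef.nonneg
  exact ⟨B, (isUnit_iff_isUnit_det B).1 (isUnit_of_mul_isUnit_left hS.isUnit), rfl⟩

end Matrix

/-- the unconstrained minimizer of the Wishart negative log-likelihood.
For a symmetric positive definite matrix `S` and `ℓ > 0`, the function
`V ↦ trace (V * S) - ℓ * log (det V)` over symmetric positive definite matrices `V`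
attains its unique global minimum at `V = ℓ • S⁻¹`. -/
theorem wishart_loglikelihood_minimizer
    {n : ℕ}
    (S : Matrix (Fin n) (Fin n) ℝ) (hS : S.PosDef)
    (l : ℝ) (hl : 0 < l) :
    ∀ V : Matrix (Fin n) (Fin n) ℝ, V.PosDef →
      ((l • S⁻¹ * S).trace - l * Real.log (l • S⁻¹).det ≤
          (V * S).trace - l * Real.log V.det ∧
        ((V * S).trace - l * Real.log V.det =
            (l • S⁻¹ * S).trace - l * Real.log (l • S⁻¹).det ↔ V = l • S⁻¹)) := by
  intro V hV
  obtain ⟨B, hB, rfl⟩ := hS.exists_eq_mul_conjTranspose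
  have hA : (Bᴴ * V * B).PosDef :=
    hV.conjTranspose_mul_mul_same (mulVec_injective_iff_isUnit.2 ((isUnit_iff_isUnit_det B).2 hB))
  have hmin : Bᴴ * (l • (B * Bᴴ)⁻¹) * B = l • 1 :=
    (conjTranspose_mul_mul_eq_smul_one_iff hB l).2 rfl
  rw [trace_mul_mul_conjTranspose_sub_mul_log_det hB.ne_zero hV.det_pos.ne',
    trace_mul_mul_conjTranspose_sub_mul_log_det hB.ne_zero (hS.inv.smul hl).det_pos.ne', hmin,
    trace_smul_one_sub_mul_log_det, add_left_inj, hA.trace_sub_mul_log_det_eq_iff hl,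
    conjTranspose_mul_mul_eq_smul_one_iff hB]
  exact ⟨add_le_add_left (hA.card_mul_le_trace_sub_mul_log_det hl) _, Iff.rfl⟩
end

section
/- Let M ∈ ℝ^{p×p}, L ∈ ℝ^{p×m}, Σ_W ∈ ℝ^{p×p} symmetric, and let (Σ_{Z_n})_{n≥0} be a sequence of real symmetric m×m matrices. Suppose Σ_{Δ_0} satisfies the steady-state equation Σ_{Δ_0} = M Σ_{Δ_0} Mᵀ + Σ_W + L Σ_{Z_0} Lᵀ, and for n ≥ 1 define Σ_{Δ_n} = M Σ_{Δ_{n-1}} Mᵀ + Σ_W + L Σ_{Z_n} Lᵀ. Define Ψ_n := Σ_{Z_n} − Σ_{Z_{n-1}} and Φ_n^j := M^j L Ψ_n Lᵀ (Mᵀ)^j. Then for every n ≥ 1, Σ_{Δ_n} = Σ_{Δ_0} + Σ_{i=0}^{n-1} Σ_{j=0}^{i} Φ_{n-i}^{j}. -/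
open Matrix Finset

section Aux
variable {p m : ℕ} (M : Matrix (Fin p) (Fin p) ℝ) (L : Matrix (Fin p) (Fin m) ℝ)
  (SZ : ℕ → Matrix (Fin m) (Fin m) ℝ)

private def Fsum (n : ℕ) : Matrix (Fin p) (Fin p) ℝ :=
  ∑ i ∈ Finset.range n, ∑ j ∈ Finset.range (i + 1),
    M ^ j * (L * (SZ (n - i) - SZ (n - i - 1)) * Lᵀ) * (Mᵀ) ^ j

private lemma telescope (n : ℕ) :
    ∑ i ∈ Finset.range n, (SZ (n - i) - SZ (n - i - 1)) = SZ n - SZ 0 := by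
  induction n with
  | zero => simp
  | succ n ih =>
    rw [Finset.sum_range_succ' (fun i => SZ (n + 1 - i) - SZ (n + 1 - i - 1))]
    have h : ∀ i, n + 1 - (i + 1) = n - i := fun i => by omega
    simp only [h]
    rw [ih]
    simp

private lemma key (n : ℕ) :
    Fsum M L SZ (n + 1) =
      L * (SZ (n + 1) - SZ 0) * Lᵀ + M * Fsum M L SZ n * Mᵀ := by
  unfold Fsum
  have peel : ∀ i : ℕ, (∑ j ∈ Finset.range (i + 1),
      M ^ j * (L * (SZ (n + 1 - i) - SZ (n + 1 - i - 1)) * Lᵀ) * (Mᵀ) ^ j)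
      = (L * (SZ (n + 1 - i) - SZ (n + 1 - i - 1)) * Lᵀ)
        + ∑ j ∈ Finset.range i,
            M ^ (j + 1) * (L * (SZ (n + 1 - i) - SZ (n + 1 - i - 1)) * Lᵀ) * (Mᵀ) ^ (j + 1) := by
    intro i
    rw [Finset.sum_range_succ' (fun j => M ^ j * (L * (SZ (n + 1 - i) - SZ (n + 1 - i - 1)) * Lᵀ) * (Mᵀ) ^ j)]
    simp [add_comm]
  simp only [peel]
  rw [Finset.sum_add_distrib]
  congr 1
  · rw [← telescope SZ (n + 1), Matrix.mul_sum, Matrix.sum_mul]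
  · rw [Finset.sum_range_succ' (fun i => ∑ j ∈ Finset.range i,
      M ^ (j + 1) * (L * (SZ (n + 1 - i) - SZ (n + 1 - i - 1)) * Lᵀ) * (Mᵀ) ^ (j + 1))]
    simp only [Finset.range_zero, Finset.sum_empty, add_zero, Nat.succ_sub_succ]
    rw [Matrix.mul_sum, Matrix.sum_mul]
    apply Finset.sum_congr rfl
    intro i _
    rw [Matrix.mul_sum, Matrix.sum_mul]
    apply Finset.sum_congr rfl
    intro j _
    rw [pow_succ', pow_succ]
    noncomm_ring

end Aux

/-- equation (21) of the paper. For the time-varying observer error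
covariance recursion, with `Ψ_n = Σ_{Z_n} - Σ_{Z_{n-1}}` and
`Φ_n^j = Mʲ L Ψ_n Lᵀ (Mᵀ)ʲ`, we have
`Σ_{Δ_n} = Σ_{Δ_0} + ∑_{i=0}^{n-1} ∑_{j=0}^{i} Φ_{n-i}^j` for every `n ≥ 1`. -/
theorem time_varying_covariance_expansion
    {p m : ℕ}
    (M : Matrix (Fin p) (Fin p) ℝ) (L : Matrix (Fin p) (Fin m) ℝ)
    (SW : Matrix (Fin p) (Fin p) ℝ) (hSW : SWᵀ = SW)
    (SZ : ℕ → Matrix (Fin m) (Fin m) ℝ) (hSZ : ∀ n, (SZ n)ᵀ = SZ n)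
    (SD : ℕ → Matrix (Fin p) (Fin p) ℝ)
    (h0 : SD 0 = M * SD 0 * Mᵀ + SW + L * SZ 0 * Lᵀ)
    (hrec : ∀ n : ℕ, 1 ≤ n → SD n = M * SD (n - 1) * Mᵀ + SW + L * SZ n * Lᵀ) :
    ∀ n : ℕ, 1 ≤ n →
      SD n = SD 0 +
        ∑ i ∈ Finset.range n, ∑ j ∈ Finset.range (i + 1),
          M ^ j * (L * (SZ (n - i) - SZ (n - i - 1)) * Lᵀ) * (Mᵀ) ^ j := by
  have main : ∀ n : ℕ, SD n = SD 0 + Fsum M L SZ n := by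
    intro n
    induction n with
    | zero => simp [Fsum]
    | succ n ih =>
      have h := hrec (n + 1) (by omega)
      simp only [Nat.add_sub_cancel] at h
      rw [h, ih, key]
      nth_rewrite 2 [h0]
      simp only [Matrix.mul_add, Matrix.add_mul, Matrix.mul_sub, Matrix.sub_mul]
      abel
  intro n hn
  exact main n
end

section
/- In the setting of the time-varying covariance recursion, assume additionally that M is Schur stable, and for each i ≥ 0 let Σ_{Δ_∞^i} denote the unique symmetric solution of X = M X Mᵀ + Σ_W + L Σ_{Z_i} Lᵀ. Define Υ_i := Σ_{Δ_∞^i} − Σ_{Δ_∞^{i-1}} for i ≥ 1. Then for every n ≥ 1, Σ_{Δ_n} = Σ_{Δ_∞^n} − Σ_{i=1}^{n} M^{n-i+1} Υ_i (Mᵀ)^{n-i+1}. -/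
/-!
Subtracting the two Stein equations at time `0` shows that `Σ_{Δ_0} - Σ_{Δ_∞^0}` is a fixed point
of `X ↦ M X Mᵀ`, hence equals `M^k X (Mᵀ)^k` for every `k`; Schur stability makes `M^k → 0`
(Gelfand's formula), so the recursion starts in the steady state. From then on the deviation
`E_n = Σ_{Δ_∞^n} - Σ_{Δ_n}` satisfies `E_n = M (Υ_n + E_{n-1}) Mᵀ`, which unrolls to the sum.
-/
open Matrix Filter Topology

namespace spectrum

variable {A : Type*} [NormedRing A] [NormedAlgebra ℂ A] [CompleteSpace A]

theorem spectralRadius_lt_one_of_forall_norm_lt_one {a : A}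
    (ha : ∀ μ ∈ spectrum ℂ a, ‖μ‖ < 1) : spectralRadius ℂ a < 1 := by
  rcases (spectrum ℂ a).eq_empty_or_nonempty with hempty | hne
  · simp [spectralRadius, hempty]
  · exact_mod_cast spectralRadius_lt_of_forall_lt_of_nonempty hne (r := 1)
      fun μ hμ => mod_cast ha μ hμ

theorem tendsto_pow_atTop_nhds_zero_of_spectralRadius_lt_one {a : A}
    (ha : spectralRadius ℂ a < 1) : Tendsto (a ^ ·) atTop (𝓝 0) := by
  obtain ⟨r, hρr, hr1⟩ := ENNReal.lt_iff_exists_nnreal_btwn.mp ha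
  have hpow_le : ∀ᶠ n : ℕ in atTop, ‖a ^ n‖ ≤ (r : ℝ) ^ n := by
    filter_upwards [(pow_nnnorm_pow_one_div_tendsto_nhds_spectralRadius a).eventually_lt_const hρr,
      eventually_gt_atTop 0] with n hn hn0
    have h := (ENNReal.rpow_inv_lt_iff (by positivity : (0 : ℝ) < n)).mp (by simpa using hn)
    exact_mod_cast h.le
  exact squeeze_zero_norm' hpow_le
    (tendsto_pow_atTop_nhds_zero_of_lt_one r.2 (mod_cast hr1))

end spectrum

namespace Matrix

variable {n : Type*} [Fintype n] [DecidableEq n]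

section LinftyOp

attribute [local instance] Matrix.linftyOpNormedRing Matrix.linftyOpNormedAlgebra

theorem tendsto_pow_atTop_nhds_zero_of_forall_norm_lt_one {A : Matrix n n ℂ}
    (hA : ∀ μ ∈ spectrum ℂ A, ‖μ‖ < 1) : Tendsto (A ^ ·) atTop (𝓝 0) :=
  have : CompleteSpace (Matrix n n ℂ) := FiniteDimensional.complete ℂ _
  spectrum.tendsto_pow_atTop_nhds_zero_of_spectralRadius_lt_one
    (spectrum.spectralRadius_lt_one_of_forall_norm_lt_one hA)

end LinftyOp

theorem tendsto_pow_atTop_nhds_zero_of_forall_norm_lt_one_map_ofReal {M : Matrix n n ℝ}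
    (hM : ∀ μ ∈ spectrum ℂ (M.map Complex.ofReal), ‖μ‖ < 1) : Tendsto (M ^ ·) atTop (𝓝 0) := by
  have hlim := (continuous_id.matrix_map Complex.continuous_re).tendsto 0 |>.comp
    (tendsto_pow_atTop_nhds_zero_of_forall_norm_lt_one hM)
  have hpow : ∀ k : ℕ, (M.map Complex.ofReal ^ k).map Complex.re = M ^ k := fun k => by
    rw [show M.map Complex.ofReal = M.map Complex.ofRealHom from rfl, ← Matrix.map_pow]
    ext; simp
  simpa [Function.comp_def, hpow] using hlim

theorem tendsto_transpose_pow_atTop_nhds_zero {R : Type*} [CommSemiring R] [TopologicalSpace R]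
    {M : Matrix n n R} (hM : Tendsto (M ^ ·) atTop (𝓝 0)) : Tendsto (Mᵀ ^ ·) atTop (𝓝 0) := by
  simpa [Function.comp_def, transpose_pow] using (continuous_id.matrix_transpose.tendsto 0).comp hM

end Matrix

section FixedPoint

variable {R : Type*}

theorem eq_zero_of_eq_mul_mul [Semiring R] [TopologicalSpace R] [ContinuousMul R] [T2Space R]
    {a b x : R} (ha : Tendsto (a ^ ·) atTop (𝓝 0)) (hb : Tendsto (b ^ ·) atTop (𝓝 0))
    (hx : x = a * x * b) : x = 0 := by
  have hiter : ∀ k : ℕ, a ^ k * x * b ^ k = x := by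
    intro k
    induction k with
    | zero => simp
    | succ k ih =>
      calc a ^ (k + 1) * x * b ^ (k + 1) = a ^ k * (a * x * b) * b ^ k := by
            rw [pow_succ, pow_succ']; simp only [mul_assoc]
        _ = x := by rw [← hx, ih]
  have hlim : Tendsto (fun k : ℕ => a ^ k * x * b ^ k) atTop (𝓝 0) := by
    simpa using (ha.mul_const x).mul hb
  simp only [hiter] at hlim
  exact tendsto_nhds_unique tendsto_const_nhds hlim

theorem eq_of_eq_mul_mul_add [Ring R] [TopologicalSpace R] [IsTopologicalRing R] [T2Space R]
    {a b q x y : R} (ha : Tendsto (a ^ ·) atTop (𝓝 0)) (hb : Tendsto (b ^ ·) atTop (𝓝 0))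
    (hx : x = a * x * b + q) (hy : y = a * y * b + q) : x = y :=
  sub_eq_zero.mp <| eq_zero_of_eq_mul_mul ha hb <| by
    conv_lhs => rw [hx, hy]
    noncomm_ring

theorem eq_sub_sum_of_eq_mul_mul_add [Ring R] {a b : R} {q s x : ℕ → R} (hx₀ : x 0 = s 0)
    (hx : ∀ k, x (k + 1) = a * x k * b + q (k + 1)) (hs : ∀ k, s k = a * s k * b + q k) (n : ℕ) :
    x n = s n - ∑ i ∈ Finset.Icc 1 n, a ^ (n - i + 1) * (s i - s (i - 1)) * b ^ (n - i + 1) := by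
  induction n with
  | zero => simp [hx₀]
  | succ n ih =>
    have hsum :
        ∑ i ∈ Finset.Icc 1 n, a ^ (n + 1 - i + 1) * (s i - s (i - 1)) * b ^ (n + 1 - i + 1) =
        a * (∑ i ∈ Finset.Icc 1 n, a ^ (n - i + 1) * (s i - s (i - 1)) * b ^ (n - i + 1)) * b := by
      rw [Finset.mul_sum, Finset.sum_mul]
      refine Finset.sum_congr rfl fun i hi => ?_
      rw [show n + 1 - i + 1 = n - i + 1 + 1 by grind, pow_succ' a, pow_succ b]
      simp only [mul_assoc]
    rw [Finset.sum_Icc_succ_top (by omega), hsum, hx, ih, Nat.sub_self, zero_add, pow_one, pow_one,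
      Nat.add_sub_cancel]
    conv_rhs => arg 1; rw [hs (n + 1)]
    noncomm_ring

end FixedPoint

theorem time_varying_covariance_steady_state_decomposition_general
    {p m : ℕ}
    (M : Matrix (Fin p) (Fin p) ℝ) (L : Matrix (Fin p) (Fin m) ℝ)
    (hM : ∀ μ ∈ spectrum ℂ (M.map (Complex.ofReal : ℝ → ℂ)), ‖μ‖ < 1)
    (SW : Matrix (Fin p) (Fin p) ℝ)
    (SZ : ℕ → Matrix (Fin m) (Fin m) ℝ)
    (SD : ℕ → Matrix (Fin p) (Fin p) ℝ)
    (h0 : SD 0 = M * SD 0 * Mᵀ + SW + L * SZ 0 * Lᵀ)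
    (hrec : ∀ n : ℕ, 1 ≤ n → SD n = M * SD (n - 1) * Mᵀ + SW + L * SZ n * Lᵀ)
    (SInf : ℕ → Matrix (Fin p) (Fin p) ℝ)
    (hSInf : ∀ i, SInf i = M * SInf i * Mᵀ + SW + L * SZ i * Lᵀ) :
    ∀ n : ℕ, 1 ≤ n →
      SD n = SInf n -
        ∑ i ∈ Finset.Icc 1 n,
          M ^ (n - i + 1) * (SInf i - SInf (i - 1)) * (Mᵀ) ^ (n - i + 1) := by
  have hpow := Matrix.tendsto_pow_atTop_nhds_zero_of_forall_norm_lt_one_map_ofReal hM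
  have hSD₀ : SD 0 = SInf 0 :=
    eq_of_eq_mul_mul_add hpow (Matrix.tendsto_transpose_pow_atTop_nhds_zero hpow)
      (h0.trans (add_assoc _ _ _)) ((hSInf 0).trans (add_assoc _ _ _))
  intro n _
  refine eq_sub_sum_of_eq_mul_mul_add hSD₀ (fun k => ?_)
    (fun k => (hSInf k).trans (add_assoc _ _ _)) n
  rw [hrec (k + 1) (by omega), Nat.add_sub_cancel, add_assoc]

/-- equation (23) of the paper. For the time-varying observer error
covariance recursion with Schur stable `M`, letting `Σ_{Δ_∞^i}` (here `SInf i`) be the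
unique symmetric solution of `X = M X Mᵀ + Σ_W + L Σ_{Z_i} Lᵀ` and
`Υ_i = Σ_{Δ_∞^i} - Σ_{Δ_∞^{i-1}}`, we have
`Σ_{Δ_n} = Σ_{Δ_∞^n} - ∑_{i=1}^{n} M^{n-i+1} Υ_i (Mᵀ)^{n-i+1}` for every `n ≥ 1`. -/
theorem time_varying_covariance_steady_state_decomposition
    {p m : ℕ}
    (M : Matrix (Fin p) (Fin p) ℝ) (L : Matrix (Fin p) (Fin m) ℝ)
    (hM : ∀ μ ∈ spectrum ℂ (M.map (Complex.ofReal : ℝ → ℂ)), ‖μ‖ < 1)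
    (SW : Matrix (Fin p) (Fin p) ℝ) (hSW : SWᵀ = SW)
    (SZ : ℕ → Matrix (Fin m) (Fin m) ℝ) (hSZ : ∀ n, (SZ n)ᵀ = SZ n)
    (SD : ℕ → Matrix (Fin p) (Fin p) ℝ)
    (h0 : SD 0 = M * SD 0 * Mᵀ + SW + L * SZ 0 * Lᵀ)
    (hrec : ∀ n : ℕ, 1 ≤ n → SD n = M * SD (n - 1) * Mᵀ + SW + L * SZ n * Lᵀ)
    (SInf : ℕ → Matrix (Fin p) (Fin p) ℝ)
    (hSInfSymm : ∀ i, (SInf i)ᵀ = SInf i)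
    (hSInf : ∀ i, SInf i = M * SInf i * Mᵀ + SW + L * SZ i * Lᵀ) :
    ∀ n : ℕ, 1 ≤ n →
      SD n = SInf n -
        ∑ i ∈ Finset.Icc 1 n,
          M ^ (n - i + 1) * (SInf i - SInf (i - 1)) * (Mᵀ) ^ (n - i + 1) :=
  time_varying_covariance_steady_state_decomposition_general M L hM SW SZ SD h0 hrec SInf hSInf
end

section
/- In the setting of the time-varying covariance recursion with M Schur stable, suppose additionally that ‖M‖₂ < 1 and that ‖Ψ_n‖₂ = ‖Σ_{Z_n} − Σ_{Z_{n-1}}‖₂ ≤ ξ for all n ≥ 1. Let C ∈ ℝ^{m×p} and for each n let Σ_{Δ_∞^n} be the unique symmetric solution of X = M X Mᵀ + Σ_W + L Σ_{Z_n} Lᵀ. Then for every n ≥ 0, ‖C (Σ_{Δ_n} − Σ_{Δ_∞^n}) Cᵀ‖₂ ≤ ξ ‖C‖₂² ‖L‖₂² ‖M‖₂² / (1 − ‖M‖₂²)². -/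
open Matrix
open scoped Matrix.Norms.L2Operator

/-!
With `q = ‖M‖²`, the map `X ↦ M X Mᵀ` contracts the spectral norm by `q`. The steady states
`Σ_{Δ_∞^n}` therefore drift by at most `d = ξ ‖L‖² / (1 - q)` per step, since their difference
solves a Stein equation forced by `L Ψ_{n+1} Lᵀ`. The error `e_n = Σ_{Δ_n} - Σ_{Δ_∞^n}` starts at
`0` and obeys `‖e_{n+1}‖ ≤ q (‖e_n‖ + d)`, so it never exceeds the fixed point `q d / (1 - q)`;
conjugating by `C` costs the factor `‖C‖²`.
-/

lemma le_div_one_sub_of_le_mul_add {x q c : ℝ} (hq : q < 1) (h : x ≤ q * x + c) :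
    x ≤ c / (1 - q) := by
  rw [le_div_iff₀ (sub_pos.mpr hq)]
  linarith

lemma le_mul_div_one_sub_of_le_mul_add {a : ℕ → ℝ} {q d : ℝ} (hq0 : 0 ≤ q) (hq1 : q ≠ 1)
    (h0 : a 0 ≤ q * d / (1 - q)) (hstep : ∀ n, a (n + 1) ≤ q * (a n + d)) (n : ℕ) :
    a n ≤ q * d / (1 - q) := by
  induction n with
  | zero => exact h0
  | succ n ih =>
    have hfix : q * (q * d / (1 - q) + d) = q * d / (1 - q) := by
      field_simp [sub_ne_zero.mpr hq1.symm]
      ring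
    calc a (n + 1) ≤ q * (a n + d) := hstep n
      _ ≤ q * (q * d / (1 - q) + d) := by gcongr
      _ = q * d / (1 - q) := hfix

namespace Matrix

variable {ι κ : Type*} [Fintype ι] [DecidableEq ι] [Fintype κ] [DecidableEq κ]

lemma l2_opNorm_transpose (A : Matrix ι κ ℝ) : ‖Aᵀ‖ = ‖A‖ := by
  rw [← l2_opNorm_conjTranspose A, conjTranspose_eq_transpose_of_trivial]

lemma l2_opNorm_mul_mul_transpose_le (A : Matrix ι κ ℝ) (X : Matrix κ κ ℝ) :
    ‖A * X * Aᵀ‖ ≤ ‖A‖ ^ 2 * ‖X‖ :=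
  calc ‖A * X * Aᵀ‖ ≤ ‖A‖ * ‖X‖ * ‖Aᵀ‖ :=
        (l2_opNorm_mul _ _).trans (by gcongr; exact l2_opNorm_mul A X)
    _ = ‖A‖ ^ 2 * ‖X‖ := by rw [l2_opNorm_transpose]; ring

lemma l2_opNorm_sub_le_of_lyapunov {M W X X' Y Y' : Matrix ι ι ℝ} {L : Matrix ι κ ℝ}
    {Z Z' : Matrix κ κ ℝ} (hX : X = M * X' * Mᵀ + W + L * Z * Lᵀ)
    (hY : Y = M * Y' * Mᵀ + W + L * Z' * Lᵀ) :
    ‖X - Y‖ ≤ ‖M‖ ^ 2 * ‖X' - Y'‖ + ‖L‖ ^ 2 * ‖Z - Z'‖ := by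
  have hdiff : X - Y = M * (X' - Y') * Mᵀ + L * (Z - Z') * Lᵀ := by
    rw [hX, hY]
    simp only [Matrix.mul_sub, Matrix.sub_mul]
    abel
  rw [hdiff]
  exact (norm_add_le _ _).trans
    (add_le_add (l2_opNorm_mul_mul_transpose_le M _) (l2_opNorm_mul_mul_transpose_le L _))

end Matrix

theorem time_varying_covariance_error_bound_general
    {p m : ℕ}
    (M : Matrix (Fin p) (Fin p) ℝ) (L : Matrix (Fin p) (Fin m) ℝ)
    (C : Matrix (Fin m) (Fin p) ℝ)
    (hM : ‖M‖ < 1)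
    (SW : Matrix (Fin p) (Fin p) ℝ)
    (SZ : ℕ → Matrix (Fin m) (Fin m) ℝ)
    (ξ : ℝ) (hξ : ∀ n : ℕ, 1 ≤ n → ‖SZ n - SZ (n - 1)‖ ≤ ξ)
    (SD : ℕ → Matrix (Fin p) (Fin p) ℝ)
    (h0 : SD 0 = M * SD 0 * Mᵀ + SW + L * SZ 0 * Lᵀ)
    (hrec : ∀ n : ℕ, 1 ≤ n → SD n = M * SD (n - 1) * Mᵀ + SW + L * SZ n * Lᵀ)
    (SInf : ℕ → Matrix (Fin p) (Fin p) ℝ)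
    (hSInf : ∀ n, SInf n = M * SInf n * Mᵀ + SW + L * SZ n * Lᵀ) :
    ∀ n : ℕ,
      ‖C * (SD n - SInf n) * Cᵀ‖ ≤
        ξ * ‖C‖ ^ 2 * ‖L‖ ^ 2 * ‖M‖ ^ 2 / (1 - ‖M‖ ^ 2) ^ 2 := by
  have hq : ‖M‖ ^ 2 < 1 := by nlinarith [norm_nonneg M]
  have hξ0 : 0 ≤ ξ := (norm_nonneg _).trans (hξ 1 le_rfl)
  set d := ξ * ‖L‖ ^ 2 / (1 - ‖M‖ ^ 2)
  have drift (n : ℕ) : ‖SInf n - SInf (n + 1)‖ ≤ d := by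
    have hZ : ‖SZ n - SZ (n + 1)‖ ≤ ξ := by
      simpa [norm_sub_rev] using hξ (n + 1) n.succ_pos
    refine le_div_one_sub_of_le_mul_add hq
      ((l2_opNorm_sub_le_of_lyapunov (hSInf n) (hSInf (n + 1))).trans ?_)
    rw [mul_comm ξ]
    gcongr
  have error_le : ∀ n, ‖SD n - SInf n‖ ≤ ‖M‖ ^ 2 * d / (1 - ‖M‖ ^ 2) := by
    refine le_mul_div_one_sub_of_le_mul_add (by positivity) hq.ne ?_ fun n => ?_
    · have h : ‖SD 0 - SInf 0‖ ≤ ‖M‖ ^ 2 * ‖SD 0 - SInf 0‖ + 0 := by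
        simpa using l2_opNorm_sub_le_of_lyapunov h0 (hSInf 0)
      exact (le_div_one_sub_of_le_mul_add hq h).trans (by rw [zero_div]; positivity)
    · calc ‖SD (n + 1) - SInf (n + 1)‖ ≤ ‖M‖ ^ 2 * ‖SD n - SInf (n + 1)‖ := by
            simpa using l2_opNorm_sub_le_of_lyapunov (hrec (n + 1) n.succ_pos) (hSInf (n + 1))
        _ ≤ ‖M‖ ^ 2 * (‖SD n - SInf n‖ + d) := by
            gcongr
            exact (norm_sub_le_norm_sub_add_norm_sub _ _ _).trans (by gcongr; exact drift n)
  intro n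
  calc ‖C * (SD n - SInf n) * Cᵀ‖ ≤ ‖C‖ ^ 2 * ‖SD n - SInf n‖ :=
        l2_opNorm_mul_mul_transpose_le C _
    _ ≤ ‖C‖ ^ 2 * (‖M‖ ^ 2 * d / (1 - ‖M‖ ^ 2)) := by gcongr; exact error_le n
    _ = ξ * ‖C‖ ^ 2 * ‖L‖ ^ 2 * ‖M‖ ^ 2 / (1 - ‖M‖ ^ 2) ^ 2 := by
        simp only [d]; field_simp

/-- the error bound underlying `ε` in (14)/Lemma 5 of the paper. For the
time-varying observer error covariance recursion with `‖M‖₂ < 1` and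
`‖Σ_{Z_n} - Σ_{Z_{n-1}}‖₂ ≤ ξ` for all `n ≥ 1`, letting `Σ_{Δ_∞^n}` (here `SInf n`) be the
unique symmetric solution of `X = M X Mᵀ + Σ_W + L Σ_{Z_n} Lᵀ`, we have
`‖C (Σ_{Δ_n} - Σ_{Δ_∞^n}) Cᵀ‖₂ ≤ ξ ‖C‖₂² ‖L‖₂² ‖M‖₂² / (1 - ‖M‖₂²)²` for all `n`.
Here `‖·‖` is the spectral (L2 operator) norm. -/
theorem time_varying_covariance_error_bound
    {p m : ℕ}
    (M : Matrix (Fin p) (Fin p) ℝ) (L : Matrix (Fin p) (Fin m) ℝ)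
    (C : Matrix (Fin m) (Fin p) ℝ)
    (hM : ‖M‖ < 1)
    (SW : Matrix (Fin p) (Fin p) ℝ) (hSW : SWᵀ = SW)
    (SZ : ℕ → Matrix (Fin m) (Fin m) ℝ) (hSZ : ∀ n, (SZ n)ᵀ = SZ n)
    (ξ : ℝ) (hξ : ∀ n : ℕ, 1 ≤ n → ‖SZ n - SZ (n - 1)‖ ≤ ξ)
    (SD : ℕ → Matrix (Fin p) (Fin p) ℝ)
    (h0 : SD 0 = M * SD 0 * Mᵀ + SW + L * SZ 0 * Lᵀ)
    (hrec : ∀ n : ℕ, 1 ≤ n → SD n = M * SD (n - 1) * Mᵀ + SW + L * SZ n * Lᵀ)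
    (SInf : ℕ → Matrix (Fin p) (Fin p) ℝ)
    (hSInfSymm : ∀ n, (SInf n)ᵀ = SInf n)
    (hSInf : ∀ n, SInf n = M * SInf n * Mᵀ + SW + L * SZ n * Lᵀ) :
    ∀ n : ℕ,
      ‖C * (SD n - SInf n) * Cᵀ‖ ≤
        ξ * ‖C‖ ^ 2 * ‖L‖ ^ 2 * ‖M‖ ^ 2 / (1 - ‖M‖ ^ 2) ^ 2 :=
  time_varying_covariance_error_bound_general M L C hM SW SZ ξ hξ SD h0 hrec SInf hSInf
end
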